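/- Let f be Lipschitz and x a periodic point with minimal period n_x. The following are equivalent: (i) I(x) = 0; (ii) the invariant probability μ_x equidistributed on the orbit {x, σx, ..., σ^{n_x−1}x} is f-maximizing; (iii) x belongs to the support of some f-maximizing invariant probability. -/

import Mathlib

open MeasureTheory Filter Real Topology
open scoped ENNReal

noncomputable section

abbrev X (d : ℕ) : Type := ℕ → Fin d

def shift {d : ℕ} (x : X d) : X d := fun n => x (n + 1)

def birkhoff {d : ℕ} (f : X d → ℝ) (n : ℕ) (x : X d) : ℝ :=
  ∑ i ∈ Finset.range n, f (shift^[i] x)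

def IsPeriodic {d : ℕ} (x : X d) : Prop := ∃ n, 0 < n ∧ shift^[n] x = x

def minPer {d : ℕ} (x : X d) : ℕ := Function.minimalPeriod shift x

def beta {d : ℕ} (f : X d → ℝ) : ℝ :=
  sSup {r : ℝ | ∃ μ : Measure (X d), IsProbabilityMeasure μ ∧ μ.map shift = μ ∧ r = ∫ x, f x ∂μ}

def Ifun {d : ℕ} (f : X d → ℝ) (x : X d) : ℝ :=
  (minPer x : ℝ) * beta f - birkhoff f (minPer x) x

def dtheta {d : ℕ} (θ : ℝ) (x y : X d) : ℝ :=
  letI : Decidable (x = y) := Classical.dec _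
  if h : x = y then 0 else θ ^ Nat.find (Function.ne_iff.mp h)

def LipWrt {d : ℕ} (θ C : ℝ) (f : X d → ℝ) : Prop :=
  ∀ x y, |f x - f y| ≤ C * dtheta θ x y

def periodize {d : ℕ} (n : ℕ) (w : Fin (n + 1) → Fin d) : X d :=
  fun i => w ⟨i % (n + 1), Nat.mod_lt i (Nat.succ_pos n)⟩

def pressure {d : ℕ} (g : X d → ℝ) : ℝ :=
  Filter.limsup (fun n : ℕ =>
    Real.log (∑ w : Fin (n + 1) → Fin d, Real.exp (birkhoff g (n + 1) (periodize n w))) / ((n : ℝ) + 1))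
    Filter.atTop

def zetaVal {d : ℕ} (f : X d → ℝ) (c s : ℝ) (k : X d → ℝ) : ℝ :=
  ∑' n : ℕ, ∑ w : Fin (n + 1) → Fin d,
    Real.exp (c * s * birkhoff f (n + 1) (periodize n w) - ((n : ℝ) + 1) * pressure (fun y => c * f y))
      * (birkhoff k (n + 1) (periodize n w) / ((n : ℝ) + 1))

def etaVal {d : ℕ} (f : X d → ℝ) (c : ℝ) (N : ℕ) (k : X d → ℝ) : ℝ :=
  ∑ n ∈ Finset.range N, ∑ w : Fin (n + 1) → Fin d,
    Real.exp (c * birkhoff f (n + 1) (periodize n w)) * (birkhoff k (n + 1) (periodize n w) / ((n : ℝ) + 1))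

def piVal {d : ℕ} (f : X d → ℝ) (c : ℝ) (N : ℕ) (k : X d → ℝ) : ℝ :=
  ∑ n ∈ Finset.range N, ∑ w : Fin (n + 1) → Fin d,
    Real.exp (c * birkhoff f (n + 1) (periodize n w) - ((n : ℝ) + 1) * pressure (fun y => c * f y))
      * (birkhoff k (n + 1) (periodize n w) / ((n : ℝ) + 1))

def cylSet {d : ℕ} (m : ℕ) (w : Fin m → Fin d) : Set (X d) :=
  {x : X d | ∀ i : Fin m, x i = w i}

def Itilde {d : ℕ} (θ : ℝ) (f : X d → ℝ) (x : X d) : EReal :=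
  ⨆ ε : {e : ℝ // 0 < e},
    sInf {r : EReal | ∃ y : X d, IsPeriodic y ∧ dtheta θ x y ≤ ε.1 ∧ r = ((Ifun f y : ℝ) : EReal)}

def orbitMeasure {d : ℕ} (x : X d) : Measure (X d) :=
  ((minPer x : ℝ≥0∞))⁻¹ • ∑ i ∈ Finset.range (minPer x), Measure.dirac (shift^[i] x)

/-!
The implications (i) ⇔ (ii) ⇒ (iii) are immediate, since `∫ f ∂μ_x = S_n f(x) / n` and `x` lies
in the support of `μ_x`. For (iii) ⇒ (ii) we build a continuous sub-action
`u(y) = sup_w (S_{|w|} f(wy) - |w| β(f))`, the supremum running over all finite words `w`.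
It is bounded above because `S_{|w|} f(wy)` is within a bounded distortion of the Birkhoff sum
along the periodic orbit of `www⋯`, which is at most `|w| β(f)`; the same distortion estimate makes
`u` continuous; and prepending one letter shows `f - β(f) ≤ u ∘ σ - u`. For a maximizing `μ` the
nonnegative continuous function `β(f) - f + u ∘ σ - u` has integral zero, hence vanishes on the
support of `μ`, which is shift-invariant; summing it along the orbit of `x` gives `S_n f(x) = n β(f)`.
-/

open Finset

namespace MeasureTheory.Measure

variable {α : Type*} [TopologicalSpace α] [MeasurableSpace α] {μ : Measure α}

lemma mem_support_iff_forall_isOpen {x : α} :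
    x ∈ μ.support ↔ ∀ U : Set α, IsOpen U → x ∈ U → 0 < μ U := by
  rw [support_eq_forall_isOpen]
  exact ⟨fun h U hU hxU => h U hxU hU, fun h U hxU hU => h U hU hxU⟩

lemma apply_mem_support_of_map_eq {T : α → α} (hT : Continuous T) (hTm : AEMeasurable T μ)
    (hμ : μ.map T = μ) {x : α} (hx : x ∈ μ.support) : T x ∈ μ.support := by
  rw [mem_support_iff_forall_isOpen] at hx ⊢
  intro U hU hxU
  calc 0 < μ (T ⁻¹' U) := hx _ (hU.preimage hT) hxU
    _ ≤ μ.map T U := le_map_apply hTm U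
    _ = μ U := by rw [hμ]

lemma iterate_mem_support_of_map_eq {T : α → α} (hT : Continuous T) (hTm : AEMeasurable T μ)
    (hμ : μ.map T = μ) {x : α} (hx : x ∈ μ.support) (n : ℕ) : T^[n] x ∈ μ.support := by
  induction n with
  | zero => exact hx
  | succ n ih =>
    rw [Function.iterate_succ_apply']
    exact apply_mem_support_of_map_eq hT hTm hμ ih

lemma eq_zero_of_mem_support {g : α → ℝ} (hg : Continuous g) (h : g =ᵐ[μ] 0) {x : α}
    (hx : x ∈ μ.support) : g x = 0 := by
  by_contra hne
  have hnull : μ {y | g y ≠ 0} = 0 := ae_iff.1 h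
  exact subset_compl_support_of_isOpen (isOpen_ne_fun hg continuous_const) hnull hne hx

end MeasureTheory.Measure

section InvariantMeasure

open MeasureTheory.Measure

variable {α : Type*} [TopologicalSpace α] [CompactSpace α] [MeasurableSpace α] [BorelSpace α]
  {T : α → α} {f u : α → ℝ} {c : ℝ}

theorem birkhoffSum_eq_of_mem_support (hT : Continuous T) (hf : Continuous f) (hu : Continuous u)
    (hsub : ∀ y, f y - c ≤ u (T y) - u y) {μ : Measure α} [IsProbabilityMeasure μ]
    (hμ : μ.map T = μ) (hμf : ∫ y, f y ∂μ = c) {x : α} (hx : x ∈ μ.support) {n : ℕ}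
    (hn : T^[n] x = x) : birkhoffSum T f n x = n * c := by
  have hintegrable : ∀ {h : α → ℝ}, Continuous h → Integrable h μ :=
    fun hh => hh.integrable_of_hasCompactSupport (.of_compactSpace _)
  obtain ⟨g, hg⟩ : ∃ g : α → ℝ, ∀ y, g y = c - f y + (u (T y) - u y) :=
    ⟨_, fun _ => rfl⟩
  have hgc : Continuous g := by
    rw [funext hg]
    fun_prop
  have hu_inv : ∫ y, u (T y) ∂μ = ∫ y, u y ∂μ := by
    conv_rhs => rw [← hμ]
    exact (integral_map hT.aemeasurable hu.aestronglyMeasurable).symm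
  have hg_int : ∫ y, g y ∂μ = 0 := by
    simp_rw [hg]
    rw [integral_add (hintegrable (h := fun y => c - f y) (by fun_prop))
        (hintegrable (h := fun y => u (T y) - u y) (by fun_prop)),
      integral_sub (integrable_const c) (hintegrable hf),
      integral_sub (hintegrable (h := fun y => u (T y)) (by fun_prop)) (hintegrable hu), hu_inv, hμf]
    simp
  have hg_ae : g =ᵐ[μ] 0 :=
    (integral_eq_zero_iff_of_nonneg (fun y => by simp only [Pi.zero_apply, hg]; linarith [hsub y])
      (hintegrable hgc)).1 hg_int
  have hu_telescope : ∑ i ∈ range n, (u (T (T^[i] x)) - u (T^[i] x)) = 0 := by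
    have h := sum_range_sub (fun i => u (T^[i] x)) n
    simp only [Function.iterate_succ_apply', hn, Function.iterate_zero_apply, sub_self] at h
    exact h
  have hg_orbit : ∑ i ∈ range n, g (T^[i] x) = n * c - birkhoffSum T f n x := by
    rw [sum_congr rfl fun i _ => hg _, sum_add_distrib, sum_sub_distrib, hu_telescope,
      birkhoffSum]
    simp
  rw [sum_eq_zero fun i _ => eq_zero_of_mem_support hgc hg_ae
    (iterate_mem_support_of_map_eq hT hT.aemeasurable hμ hx i)] at hg_orbit
  linarith

end InvariantMeasure

section OrbitAverage

variable {α : Type*} [MeasurableSpace α] {T : α → α} {m : ℕ} {z : α}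

def orbitAverage (T : α → α) (m : ℕ) (z : α) : Measure α :=
  (m : ℝ≥0∞)⁻¹ • ∑ i ∈ range m, Measure.dirac (T^[i] z)

lemma isProbabilityMeasure_orbitAverage (hm : 0 < m) :
    IsProbabilityMeasure (orbitAverage T m z) := by
  constructor
  simp only [orbitAverage, Measure.smul_apply, Measure.coe_finsetSum, Finset.sum_apply,
    measure_univ, sum_const, card_range, nsmul_eq_mul, mul_one, smul_eq_mul]
  exact ENNReal.inv_mul_cancel (by exact_mod_cast hm.ne') (ENNReal.natCast_ne_top m)

lemma sum_range_succ_eq_of_eq {M : Type*} [AddCommMonoid M] {a : ℕ → M} {m : ℕ}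
    (ha : a m = a 0) : ∑ i ∈ range m, a (i + 1) = ∑ i ∈ range m, a i := by
  cases m with
  | zero => rfl
  | succ k => rw [sum_range_succ, sum_range_succ' a, ha]

lemma map_orbitAverage (hT : Measurable T) (hz : T^[m] z = z) :
    (orbitAverage T m z).map T = orbitAverage T m z := by
  have hdirac : ∀ i ∈ range m, (Measure.dirac (T^[i] z)).map T = Measure.dirac (T^[i + 1] z) :=
    fun i _ => by rw [Measure.map_dirac' hT, Function.iterate_succ_apply']
  rw [orbitAverage, Measure.map_smul, Measure.map_finset_sum hT.aemeasurable,
    sum_congr rfl hdirac, sum_range_succ_eq_of_eq (a := fun i => Measure.dirac (T^[i] z))]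
  rw [hz, Function.iterate_zero_apply]

lemma integral_orbitAverage [MeasurableSingletonClass α] (g : α → ℝ) :
    ∫ y, g y ∂(orbitAverage T m z) = birkhoffSum T g m z / m := by
  rw [orbitAverage, integral_smul_measure,
    integral_finsetSum_measure fun i _ => integrable_dirac enorm_lt_top]
  simp [integral_dirac, birkhoffSum, div_eq_inv_mul]

lemma self_mem_support_orbitAverage [TopologicalSpace α] (hm : 0 < m) :
    z ∈ (orbitAverage T m z).support := by
  refine Measure.mem_support_iff_forall_isOpen.2 fun U _ hzU => ?_
  calc (0 : ℝ≥0∞) < (m : ℝ≥0∞)⁻¹ * Measure.dirac (T^[0] z) U := by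
        simp [Measure.dirac_apply_of_mem hzU]
    _ ≤ (m : ℝ≥0∞)⁻¹ * ∑ i ∈ range m, Measure.dirac (T^[i] z) U :=
        mul_le_mul_right
          (single_le_sum (f := fun i => Measure.dirac (T^[i] z) U) (fun i _ => zero_le)
            (mem_range.2 hm)) _
    _ = orbitAverage T m z U := by
        simp [orbitAverage]

end OrbitAverage

section Shift

variable {d : ℕ} {θ C : ℝ} {f : X d → ℝ}

lemma iterate_shift_apply (i : ℕ) (x : X d) (j : ℕ) : (shift^[i] x) j = x (j + i) := by
  induction i generalizing x with
  | zero => rfl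
  | succ i ih =>
    rw [Function.iterate_succ_apply, ih]
    rfl

lemma continuous_shift : Continuous (shift (d := d)) :=
  continuous_pi fun n => continuous_apply (n + 1)

lemma measurable_shift : Measurable (shift (d := d)) :=
  continuous_shift.measurable

lemma birkhoff_eq_birkhoffSum (f : X d → ℝ) (n : ℕ) (x : X d) :
    birkhoff f n x = birkhoffSum shift f n x :=
  rfl

lemma integral_le_beta (hf : Continuous f) {μ : Measure (X d)} [IsProbabilityMeasure μ]
    (hμ : μ.map shift = μ) : ∫ y, f y ∂μ ≤ beta f := by
  obtain ⟨B, hB⟩ := (isCompact_range hf).bddAbove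
  refine le_csSup ⟨B, ?_⟩ ⟨μ, inferInstance, hμ, rfl⟩
  rintro r ⟨ν, hν, -, rfl⟩
  calc ∫ y, f y ∂ν ≤ ∫ _, B ∂ν :=
        integral_mono (hf.integrable_of_hasCompactSupport (.of_compactSpace f))
          (integrable_const B) fun y => hB ⟨y, rfl⟩
    _ = B := by simp

lemma birkhoff_le_mul_beta (hf : Continuous f) {m : ℕ} (hm : 0 < m) {z : X d}
    (hz : shift^[m] z = z) : birkhoff f m z ≤ m * beta f := by
  have := isProbabilityMeasure_orbitAverage (T := shift) (z := z) hm
  have h := integral_le_beta hf (map_orbitAverage measurable_shift hz)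
  rw [integral_orbitAverage, ← birkhoff_eq_birkhoffSum, div_le_iff₀ (by exact_mod_cast hm)] at h
  linarith

lemma dtheta_le_pow (hθ0 : 0 < θ) (hθ1 : θ < 1) {x y : X d} {k : ℕ}
    (h : ∀ i < k, x i = y i) : dtheta θ x y ≤ θ ^ k := by
  unfold dtheta
  split
  · positivity
  · exact pow_le_pow_of_le_one hθ0.le hθ1.le
      ((Nat.le_find_iff _ _).2 fun i hi => not_not_intro (h i hi))

lemma LipWrt.abs_sub_le_pow (hf : LipWrt θ C f) (hθ0 : 0 < θ) (hθ1 : θ < 1) {x y : X d}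
    {k : ℕ} (h : ∀ i < k, x i = y i) : |f x - f y| ≤ |C| * θ ^ k := by
  have hdist : 0 ≤ dtheta θ x y := by
    unfold dtheta
    split <;> positivity
  calc |f x - f y| ≤ C * dtheta θ x y := hf x y
    _ ≤ |C| * dtheta θ x y := mul_le_mul_of_nonneg_right (le_abs_self C) hdist
    _ ≤ |C| * θ ^ k := mul_le_mul_of_nonneg_left (dtheta_le_pow hθ0 hθ1 h) (abs_nonneg C)

lemma continuous_of_abs_sub_le_pow (hθ0 : 0 < θ) (hθ1 : θ < 1) {K : ℝ} {g : X d → ℝ}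
    (hg : ∀ k (x y : X d), (∀ i < k, x i = y i) → |g x - g y| ≤ K * θ ^ k) :
    Continuous g := by
  refine continuous_iff_continuousAt.2 fun x => Metric.tendsto_nhds.2 fun ε hε => ?_
  have hlim : Tendsto (fun k : ℕ => K * θ ^ k) atTop (𝓝 0) := by
    simpa using (tendsto_pow_atTop_nhds_zero_of_lt_one hθ0.le hθ1).const_mul K
  obtain ⟨k, hk⟩ := (hlim.eventually (gt_mem_nhds hε)).exists
  have hcyl : ∀ᶠ y in 𝓝 x, ∀ i ∈ range k, y i = x i :=
    (eventually_all_finset _).2 fun i _ =>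
      (continuous_apply i).continuousAt.eventually_mem ((isOpen_discrete {x i}).mem_nhds rfl)
  filter_upwards [hcyl] with y hy
  rw [Real.dist_eq]
  exact (hg k y x fun i hi => hy i (mem_range.2 hi)).trans_lt hk

lemma LipWrt.continuous (hf : LipWrt θ C f) (hθ0 : 0 < θ) (hθ1 : θ < 1) : Continuous f :=
  continuous_of_abs_sub_le_pow hθ0 hθ1 fun _ _ _ h => hf.abs_sub_le_pow hθ0 hθ1 h

lemma LipWrt.abs_birkhoff_sub_le (hf : LipWrt θ C f) (hθ0 : 0 < θ) (hθ1 : θ < 1) {m k : ℕ}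
    {z z' : X d} (h : ∀ j < m + k, z j = z' j) :
    |birkhoff f m z - birkhoff f m z'| ≤ |C| / (1 - θ) * θ ^ k := by
  calc |birkhoff f m z - birkhoff f m z'|
      = |∑ i ∈ range m, (f (shift^[i] z) - f (shift^[i] z'))| := by
        rw [birkhoff, birkhoff, sum_sub_distrib]
    _ ≤ ∑ i ∈ range m, |f (shift^[i] z) - f (shift^[i] z')| := abs_sum_le_sum_abs _ _
    _ ≤ ∑ i ∈ range m, |C| * θ ^ (k + (m - 1 - i)) := by
        refine sum_le_sum fun i hi => hf.abs_sub_le_pow hθ0 hθ1 fun j hj => ?_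
        rw [iterate_shift_apply, iterate_shift_apply]
        exact h _ (by rw [mem_range] at hi; omega)
    _ = |C| * ∑ j ∈ Ico k (k + m), θ ^ j := by
        rw [← mul_sum, sum_range_reflect (fun i => θ ^ (k + i)) m, sum_Ico_eq_sum_range,
          Nat.add_sub_cancel_left]
    _ ≤ |C| * (θ ^ k / (1 - θ)) :=
        mul_le_mul_of_nonneg_left (geom_sum_Ico_le_of_lt_one hθ0.le hθ1) (abs_nonneg C)
    _ = |C| / (1 - θ) * θ ^ k := by ring

end Shift

section Subaction

variable {d : ℕ} {θ C : ℝ} {f : X d → ℝ}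

abbrev Word (d : ℕ) : Type := Σ m : ℕ, Fin m → Fin d

instance : Nonempty (Word d) := ⟨⟨0, Fin.elim0⟩⟩

def prependWord {m : ℕ} (w : Fin m → Fin d) (y : X d) : X d :=
  fun i => if h : i < m then w ⟨i, h⟩ else y (i - m)

lemma iterate_shift_prependWord {m : ℕ} (w : Fin m → Fin d) (y : X d) :
    shift^[m] (prependWord w y) = y := by
  funext j
  simp [iterate_shift_apply, prependWord]

lemma prependWord_snoc_shift {m : ℕ} (w : Fin m → Fin d) (y : X d) :
    prependWord (Fin.snoc w (y 0) : Fin (m + 1) → Fin d) (shift y) = prependWord w y := by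
  funext i
  rcases lt_trichotomy i m with hi | rfl | hi
  · simp [prependWord, Fin.snoc, hi, Nat.lt_succ_of_lt hi]
  · simp [prependWord, Fin.snoc]
  · simp only [prependWord, Fin.snoc, shift, dif_neg (show ¬i < m + 1 by omega),
      dif_neg hi.not_gt]
    congr 1
    omega

lemma LipWrt.birkhoff_prependWord_le (hf : LipWrt θ C f) (hθ0 : 0 < θ) (hθ1 : θ < 1) {m : ℕ}
    (w : Fin m → Fin d) (y : X d) :
    birkhoff f m (prependWord w y) - m * beta f ≤ |C| / (1 - θ) := by
  rcases Nat.eq_zero_or_pos m with rfl | hm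
  · simp only [birkhoff, range_zero, sum_empty, CharP.cast_eq_zero, zero_mul, sub_zero]
    exact div_nonneg (abs_nonneg C) (by linarith)
  set q : X d := fun j => w ⟨j % m, Nat.mod_lt j hm⟩
  have hq : shift^[m] q = q := funext fun j => by simp [q, iterate_shift_apply]
  have hagree : ∀ j < m + 0, prependWord w y j = q j := fun j hj => by
    simp [prependWord, q, Nat.mod_eq_of_lt (show j < m by omega), show j < m by omega]
  have hdist := (abs_le.1 (hf.abs_birkhoff_sub_le hθ0 hθ1 hagree)).2
  have hper := birkhoff_le_mul_beta (hf.continuous hθ0 hθ1) hm hq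
  rw [pow_zero, mul_one] at hdist
  linarith

def subaction (f : X d → ℝ) (y : X d) : ℝ :=
  ⨆ p : Word d, birkhoff f p.1 (prependWord p.2 y) - p.1 * beta f

lemma LipWrt.le_subaction (hf : LipWrt θ C f) (hθ0 : 0 < θ) (hθ1 : θ < 1) (p : Word d)
    (y : X d) : birkhoff f p.1 (prependWord p.2 y) - p.1 * beta f ≤ subaction f y :=
  le_ciSup (f := fun p : Word d => birkhoff f p.1 (prependWord p.2 y) - p.1 * beta f)
    ⟨_, Set.forall_mem_range.2 fun p => hf.birkhoff_prependWord_le hθ0 hθ1 p.2 y⟩ p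

lemma LipWrt.subaction_le_add (hf : LipWrt θ C f) (hθ0 : 0 < θ) (hθ1 : θ < 1) {k : ℕ}
    {y y' : X d} (h : ∀ i < k, y i = y' i) :
    subaction f y ≤ subaction f y' + |C| / (1 - θ) * θ ^ k := by
  refine ciSup_le fun ⟨m, w⟩ => ?_
  have hagree : ∀ j < m + k, prependWord w y j = prependWord w y' j := fun j hj => by
    unfold prependWord
    split_ifs with hj'
    · rfl
    · exact h _ (by omega)
  have hdist := (abs_le.1 (hf.abs_birkhoff_sub_le hθ0 hθ1 hagree)).2
  have hle := hf.le_subaction hθ0 hθ1 ⟨m, w⟩ y'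
  dsimp only at hle ⊢
  linarith

lemma LipWrt.continuous_subaction (hf : LipWrt θ C f) (hθ0 : 0 < θ) (hθ1 : θ < 1) :
    Continuous (subaction f) := by
  refine continuous_of_abs_sub_le_pow (K := |C| / (1 - θ)) hθ0 hθ1 fun k y y' h =>
    abs_sub_le_iff.2 ⟨?_, ?_⟩
  · linarith [hf.subaction_le_add hθ0 hθ1 h]
  · linarith [hf.subaction_le_add hθ0 hθ1 fun i hi => (h i hi).symm]

lemma LipWrt.sub_beta_le_subaction_shift_sub (hf : LipWrt θ C f) (hθ0 : 0 < θ) (hθ1 : θ < 1)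
    (y : X d) : f y - beta f ≤ subaction f (shift y) - subaction f y := by
  suffices subaction f y ≤ subaction f (shift y) - (f y - beta f) by linarith
  refine ciSup_le fun ⟨m, w⟩ => ?_
  have hle := hf.le_subaction hθ0 hθ1 ⟨m + 1, Fin.snoc w (y 0)⟩ (shift y)
  have hlast : birkhoff f (m + 1) (prependWord w y) = birkhoff f m (prependWord w y) + f y := by
    rw [birkhoff, sum_range_succ, ← birkhoff, iterate_shift_prependWord]
  dsimp only at hle ⊢
  rw [prependWord_snoc_shift, hlast] at hle
  push_cast at hle
  linarith

end Subaction

theorem stmt10_general (d : ℕ) (θ C : ℝ) (hθ0 : 0 < θ) (hθ1 : θ < 1)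
    (f : X d → ℝ) (hf : LipWrt θ C f) (x : X d) (hx : IsPeriodic x) :
    (Ifun f x = 0 ↔ ∫ y, f y ∂(orbitMeasure x) = beta f) ∧
    ((∫ y, f y ∂(orbitMeasure x) = beta f) ↔
      ∃ μ : Measure (X d), IsProbabilityMeasure μ ∧ μ.map shift = μ ∧
        (∫ y, f y ∂μ) = beta f ∧ ∀ U : Set (X d), IsOpen U → x ∈ U → 0 < μ U) := by
  obtain ⟨m, hm, hxm⟩ := hx
  have hn : 0 < minPer x := Function.IsPeriodicPt.minimalPeriod_pos hm hxm
  have hxn : shift^[minPer x] x = x := Function.isPeriodicPt_minimalPeriod shift x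
  have horbit : orbitMeasure x = orbitAverage shift (minPer x) x := rfl
  have hmean : ∫ y, f y ∂(orbitMeasure x) = birkhoff f (minPer x) x / minPer x := by
    rw [horbit, integral_orbitAverage, birkhoff_eq_birkhoffSum]
  have hn' : (minPer x : ℝ) ≠ 0 := by positivity
  refine ⟨?_, fun h => ?_, fun ⟨μ, hμ, hμinv, hμf, hsupp⟩ => ?_⟩
  · rw [Ifun, hmean, div_eq_iff hn', sub_eq_zero, eq_comm, mul_comm]
  · rw [horbit] at h
    exact ⟨_, isProbabilityMeasure_orbitAverage hn, map_orbitAverage measurable_shift hxn, h,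
      Measure.mem_support_iff_forall_isOpen.1 (self_mem_support_orbitAverage hn)⟩
  · rw [hmean, birkhoff_eq_birkhoffSum, birkhoffSum_eq_of_mem_support continuous_shift
      (hf.continuous hθ0 hθ1) (hf.continuous_subaction hθ0 hθ1)
      (hf.sub_beta_le_subaction_shift_sub hθ0 hθ1) hμinv hμf
      (Measure.mem_support_iff_forall_isOpen.2 hsupp) hxn]
    field_simp

theorem stmt10 (d : ℕ) (hd : 0 < d) (θ C : ℝ) (hθ0 : 0 < θ) (hθ1 : θ < 1)
    (f : X d → ℝ) (hf : LipWrt θ C f) (x : X d) (hx : IsPeriodic x) :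
    (Ifun f x = 0 ↔ ∫ y, f y ∂(orbitMeasure x) = beta f) ∧
    ((∫ y, f y ∂(orbitMeasure x) = beta f) ↔
      ∃ μ : Measure (X d), IsProbabilityMeasure μ ∧ μ.map shift = μ ∧
        (∫ y, f y ∂μ) = beta f ∧ ∀ U : Set (X d), IsOpen U → x ∈ U → 0 < μ U) :=
  stmt10_general d θ C hθ0 hθ1 f hf x hx
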